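/- arXiv:math/0612761 — 6 statements merged into one kernel-verified Lean document; each statement's English description precedes it below -/
import Mathlib

section
/- Let a ∈ A and c ∈ ℂˣ. For w ∈ ℂ such that the linear map L_w : A → A, L_w(X) = wX + aX − Xa, is invertible (which holds for all but finitely many w), set φ_a(w) = L_w^{-1}. Then the function r(u) = Σ_{i,j} φ_a(cu)(e_{ij}) ⊗ e_{ji} ∈ A⊗A, defined for those u ∈ ℂ with L_{cu} invertible, satisfies r^{12}(−u')·r^{13}(u+u') − r^{23}(u+u')·r^{12}(u) + r^{13}(u)·r^{23}(u') = 0 and r^{21}(−u) = −r(u) whenever all the relevant arguments lie in its domain; moreover each tensor r(u) is nondegenerate. -/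
open scoped TensorProduct
set_option maxHeartbeats 1000000
noncomputable section

/-- The algebra of `N × N` complex matrices. -/
abbrev Mat (N : ℕ) := Matrix (Fin N) (Fin N) ℂ
/-- `A ⊗ A`. -/
abbrev TT (N : ℕ) := Mat N ⊗[ℂ] Mat N
/-- `A ⊗ A ⊗ A`. -/
abbrev TTT (N : ℕ) := Mat N ⊗[ℂ] (Mat N ⊗[ℂ] Mat N)

variable (N : ℕ)

/-- Matrix units `e_{ij}`. -/
def E (i j : Fin N) : Mat N := Matrix.single i j 1

/-- `x^{12}`: `a ⊗ b ↦ a ⊗ b ⊗ 1`. -/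
def leg12 : TT N →ₐ[ℂ] TTT N :=
  Algebra.TensorProduct.map (AlgHom.id ℂ (Mat N))
    (Algebra.TensorProduct.includeLeft (R := ℂ) (A := Mat N) (B := Mat N))

/-- `x^{13}`: `a ⊗ b ↦ a ⊗ 1 ⊗ b`. -/
def leg13 : TT N →ₐ[ℂ] TTT N :=
  Algebra.TensorProduct.map (AlgHom.id ℂ (Mat N))
    (Algebra.TensorProduct.includeRight (R := ℂ) (A := Mat N) (B := Mat N))

/-- `x^{23}`: `a ⊗ b ↦ 1 ⊗ a ⊗ b`. -/
def leg23 : TT N →ₐ[ℂ] TTT N :=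
  Algebra.TensorProduct.includeRight (R := ℂ) (A := Mat N) (B := TT N)

/-- `x^{21}`: `a ⊗ b ↦ b ⊗ a`. -/
def flip21 : TT N →ₐ[ℂ] TT N :=
  (Algebra.TensorProduct.comm ℂ (Mat N) (Mat N)).toAlgHom

/-- The `A ⊗ A`-valued function with coefficient functions `ρ`:
`r(u) = Σ ρ_{ij,kl}(u) e_{ij} ⊗ e_{kl}`. -/
def rOf (ρ : Fin N → Fin N → Fin N → Fin N → ℂ → ℂ) (u : ℂ) : TT N :=
  ∑ i : Fin N, ∑ j : Fin N, ∑ k : Fin N, ∑ l : Fin N,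
    ρ i j k l u • (E N i j ⊗ₜ[ℂ] E N k l)

/-- `u` is a non-pole point of `r` in `D`: all coefficient functions are analytic at `u`. -/
def GoodAt (D : Set ℂ) (ρ : Fin N → Fin N → Fin N → Fin N → ℂ → ℂ) (u : ℂ) : Prop :=
  u ∈ D ∧ ∀ i j k l : Fin N, AnalyticAt ℂ (ρ i j k l) u

/-- A tensor `x = Σ x_{ij,kl} e_{ij} ⊗ e_{kl}` (given by its coefficients) is
nondegenerate if the `N² × N²` matrix `(x_{ij,kl})` is invertible. -/
def NondegCoeff (x : Fin N → Fin N → Fin N → Fin N → ℂ) : Prop :=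
  IsUnit (Matrix.of fun p q : Fin N × Fin N => x p.1 p.2 q.1 q.2)

/-!
`L_w = w + ad a` satisfies the shifted Leibniz rule `L_{w₁+w₂}(XY) = L_{w₁}(X) Y + X L_{w₂}(Y)`,
so its inverses satisfy the resolvent identity `φ(w₁)x · φ(w₂)y = φ(w₁+w₂)(x φ(w₂)y + φ(w₁)x y)`;
and `L_{-w}` is minus the transpose of `L_w` for the trace form, so `φ(-w) = -φ(w)ᵀ`.
Since `r(u) = (φ(cu) ⊗ id)(P)` for the flip tensor `P = Σ e_ij ⊗ e_ji`, and
`P (X ⊗ 1) = (1 ⊗ X) P`, `(f ⊗ id)(P) = (id ⊗ fᵀ)(P)`, the resolvent identity with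
`w₁ = -cu'`, `w₂ = c(u+u')` splits the first AYBE term into the second minus the third, while the
transpose relation gives unitarity. Nondegeneracy of `r(u)` is invertibility of `φ(cu)`, and `w`
is singular iff `-w` lies in the finite spectrum of `ad a`.
-/

/-- `L_w = w + ad a`. -/
def shiftedAd {K A : Type*} [CommSemiring K] [Ring A] [Algebra K A] (a : A) (w : K) (X : A) : A :=
  w • X + a * X - X * a

section Resolvent

variable {K A : Type*} [CommSemiring K] [Ring A] [Algebra K A]

theorem shiftedAd_mul (a : A) (w₁ w₂ : K) (X Y : A) :
    shiftedAd a (w₁ + w₂) (X * Y) = shiftedAd a w₁ X * Y + X * shiftedAd a w₂ Y := by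
  simp only [shiftedAd, add_smul, add_mul, mul_add, sub_mul, mul_sub, smul_mul_assoc,
    mul_smul_comm, mul_assoc]
  abel

theorem mul_eq_of_rightInverse_shiftedAd {a : A} {w₁ w₂ w : K} (hw : w₁ + w₂ = w)
    {ψ₁ ψ₂ ψ : A → A} (hinj : Function.Injective (shiftedAd a w))
    (h₁ : Function.RightInverse ψ₁ (shiftedAd a w₁))
    (h₂ : Function.RightInverse ψ₂ (shiftedAd a w₂))
    (h : Function.RightInverse ψ (shiftedAd a w)) (x y : A) :
    ψ₁ x * ψ₂ y = ψ (x * ψ₂ y + ψ₁ x * y) :=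
  hinj <| by rw [h, ← hw, shiftedAd_mul, h₁, h₂]

end Resolvent

theorem setOf_not_bijective_shiftedAd_finite {K A : Type*} [Field K] [Ring A] [Algebra K A]
    [FiniteDimensional K A] (a : A) :
    {w : K | ¬ Function.Bijective (shiftedAd a w)}.Finite := by
  let D : Module.End K A := LinearMap.mulLeft K a - LinearMap.mulRight K a
  refine ((Module.End.finite_spectrum D).preimage neg_injective.injOn).subset fun w hw => ?_
  have hL : ⇑(-(algebraMap K (Module.End K A) (-w) - D)) = shiftedAd a w := by
    ext X
    simp only [map_neg, neg_sub, sub_neg_eq_add, LinearMap.add_apply, LinearMap.sub_apply,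
      LinearMap.mulLeft_apply, LinearMap.mulRight_apply, Module.algebraMap_end_apply, shiftedAd, D]
    abel
  by_contra hres
  exact hw (hL ▸ (Module.End.isUnit_iff _).mp (spectrum.notMem_iff.mp hres).neg)

section Trace

variable {n R : Type*} [Fintype n] [DecidableEq n] [CommRing R]

theorem trace_mul_shiftedAd (a : Matrix n n R) {w w' : R} (hw : w + w' = 0)
    (X Y : Matrix n n R) :
    (X * shiftedAd a w' Y).trace = -(shiftedAd a w X * Y).trace := by
  rw [show w' = -w by linear_combination hw]
  simp only [shiftedAd, mul_add, mul_sub, add_mul, sub_mul, Matrix.trace_add, Matrix.trace_sub,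
    Matrix.mul_smul, Matrix.smul_mul, Matrix.trace_smul, ← mul_assoc, Matrix.trace_mul_cycle X Y a,
    smul_eq_mul]
  ring

theorem trace_mul_rightInverse_shiftedAd {a : Matrix n n R} {w w' : R} (hw : w + w' = 0)
    {ψ ψ' : Matrix n n R → Matrix n n R} (hψ : Function.RightInverse ψ (shiftedAd a w))
    (hψ' : Function.RightInverse ψ' (shiftedAd a w')) (X Y : Matrix n n R) :
    (X * ψ' Y).trace = -(ψ X * Y).trace := by
  conv_lhs => rw [← hψ X]
  rw [← neg_neg (Matrix.trace _), ← trace_mul_shiftedAd a hw, hψ']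

end Trace

section MatrixUnits

variable {N}

theorem E_mul_eq_sum (i j : Fin N) (X : Mat N) : E N i j * X = ∑ l, X j l • E N i l := by
  ext x y
  simp [E, Matrix.mul_apply, Matrix.single, Matrix.sum_apply, ite_and]

theorem mul_E_eq_sum (X : Mat N) (i j : Fin N) : X * E N i j = ∑ m, X m i • E N m j := by
  ext x y
  simp [E, Matrix.mul_apply, Matrix.single, Matrix.sum_apply, ite_and]

theorem eq_sum_smul_E (X : Mat N) : X = ∑ q : Fin N × Fin N, X q.1 q.2 • E N q.1 q.2 := by
  simp only [Fintype.sum_prod_type, E, Matrix.smul_single, smul_eq_mul, mul_one]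
  exact X.matrix_eq_sum_single

theorem eq_sum_smul_E_swap (X : Mat N) : X = ∑ q : Fin N × Fin N, X q.2 q.1 • E N q.2 q.1 :=
  (eq_sum_smul_E X).trans <| Fintype.sum_equiv (Equiv.prodComm _ _) _ _ fun _ => rfl

theorem apply_E_apply_eq {f g : Mat N →ₗ[ℂ] Mat N}
    (hfg : ∀ X Y, (f X * Y).trace = (X * g Y).trace) (i j k l : Fin N) :
    f (E N i j) k l = g (E N l k) j i := by
  have h := hfg (E N i j) (E N l k)
  simpa [E, Matrix.trace_mul_single, Matrix.trace_single_mul] using h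

variable {M : Type*} [AddCommMonoid M]

theorem sum_E_swap (F : Mat N → Mat N → M) :
    ∑ p : Fin N × Fin N, F (E N p.1 p.2) (E N p.2 p.1)
      = ∑ p : Fin N × Fin N, F (E N p.2 p.1) (E N p.1 p.2) :=
  Fintype.sum_equiv (Equiv.prodComm _ _) _ _ fun _ => rfl

variable [Module ℂ M] (B : Mat N →ₗ[ℂ] Mat N →ₗ[ℂ] M)

theorem sum_E_mul (X : Mat N) :
    ∑ p : Fin N × Fin N, B (E N p.1 p.2 * X) (E N p.2 p.1)
      = ∑ p : Fin N × Fin N, B (E N p.1 p.2) (X * E N p.2 p.1) := by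
  simp only [E_mul_eq_sum, mul_E_eq_sum, map_sum, map_smul, LinearMap.sum_apply,
    LinearMap.smul_apply, Fintype.sum_prod_type]
  exact Finset.sum_congr rfl fun i _ => Finset.sum_comm

theorem sum_mul_E (X : Mat N) :
    ∑ p : Fin N × Fin N, B (X * E N p.1 p.2) (E N p.2 p.1)
      = ∑ p : Fin N × Fin N, B (E N p.1 p.2) (E N p.2 p.1 * X) :=
  calc _ = ∑ p : Fin N × Fin N, B.flip (E N p.1 p.2) (X * E N p.2 p.1) :=
        sum_E_swap fun x y => B (X * x) y
    _ = ∑ p : Fin N × Fin N, B.flip (E N p.1 p.2 * X) (E N p.2 p.1) := (sum_E_mul B.flip X).symm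
    _ = _ := sum_E_swap fun x y => B y (x * X)

theorem sum_apply_E_eq {f g : Mat N →ₗ[ℂ] Mat N}
    (hfg : ∀ X Y, (f X * Y).trace = (X * g Y).trace) :
    ∑ p : Fin N × Fin N, B (f (E N p.1 p.2)) (E N p.2 p.1)
      = ∑ p : Fin N × Fin N, B (E N p.1 p.2) (g (E N p.2 p.1)) := by
  calc _ = ∑ p : Fin N × Fin N, ∑ q : Fin N × Fin N,
        f (E N p.1 p.2) q.1 q.2 • B (E N q.1 q.2) (E N p.2 p.1) := by
        refine Finset.sum_congr rfl fun p _ => ?_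
        conv_lhs => rw [eq_sum_smul_E (f _)]
        simp only [map_sum, map_smul, LinearMap.sum_apply, LinearMap.smul_apply]
    _ = ∑ q : Fin N × Fin N, B (E N q.1 q.2)
          (∑ p : Fin N × Fin N, g (E N q.2 q.1) p.2 p.1 • E N p.2 p.1) := by
        rw [Finset.sum_comm]
        simp only [apply_E_apply_eq hfg, map_sum, map_smul]
    _ = _ := by simp only [← eq_sum_smul_E_swap]

end MatrixUnits

section Casimir

variable {N}

/-- `casimir f = (f ⊗ id)(P)` for the flip tensor `P = Σ e_ij ⊗ e_ji`. -/
def casimir (f : Mat N →ₗ[ℂ] Mat N) : TT N :=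
  ∑ p : Fin N × Fin N, f (E N p.1 p.2) ⊗ₜ[ℂ] E N p.2 p.1

@[simp] theorem leg12_tmul (x y : Mat N) : leg12 N (x ⊗ₜ[ℂ] y) = x ⊗ₜ[ℂ] (y ⊗ₜ[ℂ] 1) := by
  simp [leg12]

@[simp] theorem leg13_tmul (x y : Mat N) : leg13 N (x ⊗ₜ[ℂ] y) = x ⊗ₜ[ℂ] (1 ⊗ₜ[ℂ] y) := by
  simp [leg13]

@[simp] theorem leg23_tmul (x y : Mat N) : leg23 N (x ⊗ₜ[ℂ] y) = 1 ⊗ₜ[ℂ] (x ⊗ₜ[ℂ] y) := by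
  simp [leg23]

@[simp] theorem flip21_tmul (x y : Mat N) : flip21 N (x ⊗ₜ[ℂ] y) = y ⊗ₜ[ℂ] x := by
  simp [flip21]

theorem flip21_casimir {f g : Mat N →ₗ[ℂ] Mat N}
    (hfg : ∀ X Y, (X * f Y).trace = -(g X * Y).trace) :
    flip21 N (casimir f) = -casimir g := by
  have hgf : ∀ X Y, ((-g) X * Y).trace = (X * f Y).trace := by simp [hfg]
  calc flip21 N (casimir f)
      = ∑ p : Fin N × Fin N,
          TensorProduct.mk ℂ (Mat N) (Mat N) (E N p.1 p.2) (f (E N p.2 p.1)) := by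
        simp only [casimir, map_sum, flip21_tmul, TensorProduct.mk_apply]
        exact sum_E_swap fun x y => y ⊗ₜ[ℂ] f x
    _ = -casimir g := by
        rw [← sum_apply_E_eq _ hgf]
        simp [casimir]

theorem leg12_casimir_mul_leg13_casimir (k h : Mat N →ₗ[ℂ] Mat N) :
    leg12 N (casimir k) * leg13 N (casimir h) = ∑ p : Fin N × Fin N, ∑ q : Fin N × Fin N,
      (k (E N p.1 p.2) * h (E N q.1 q.2)) ⊗ₜ[ℂ] (E N p.2 p.1 ⊗ₜ[ℂ] E N q.2 q.1) := by
  rw [casimir, casimir, map_sum, map_sum, Finset.sum_mul_sum (R := TTT N)]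
  simp only [leg12_tmul, leg13_tmul, Algebra.TensorProduct.tmul_mul_tmul, one_mul, mul_one]

theorem leg23_casimir_mul_leg12_casimir (h f : Mat N →ₗ[ℂ] Mat N) :
    leg23 N (casimir h) * leg12 N (casimir f) = ∑ q : Fin N × Fin N, ∑ p : Fin N × Fin N,
      f (E N p.1 p.2) ⊗ₜ[ℂ] ((h (E N q.1 q.2) * E N p.2 p.1) ⊗ₜ[ℂ] E N q.2 q.1) := by
  rw [casimir, casimir, map_sum, map_sum, Finset.sum_mul_sum (R := TTT N)]
  simp only [leg12_tmul, leg23_tmul, Algebra.TensorProduct.tmul_mul_tmul, one_mul, mul_one]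

theorem leg13_casimir_mul_leg23_casimir (f g : Mat N →ₗ[ℂ] Mat N) :
    leg13 N (casimir f) * leg23 N (casimir g) = ∑ p : Fin N × Fin N, ∑ q : Fin N × Fin N,
      f (E N p.1 p.2) ⊗ₜ[ℂ] (g (E N q.1 q.2) ⊗ₜ[ℂ] (E N p.2 p.1 * E N q.2 q.1)) := by
  rw [casimir, casimir, map_sum, map_sum, Finset.sum_mul_sum (R := TTT N)]
  simp only [leg13_tmul, leg23_tmul, Algebra.TensorProduct.tmul_mul_tmul, one_mul, mul_one]

theorem sum_apply_E_mul_tmul (f h : Mat N →ₗ[ℂ] Mat N) :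
    ∑ p : Fin N × Fin N, ∑ q : Fin N × Fin N,
        f (E N p.1 p.2 * h (E N q.1 q.2)) ⊗ₜ[ℂ] (E N p.2 p.1 ⊗ₜ[ℂ] E N q.2 q.1)
      = leg23 N (casimir h) * leg12 N (casimir f) := by
  rw [leg23_casimir_mul_leg12_casimir, Finset.sum_comm]
  refine Finset.sum_congr rfl fun q _ => ?_
  exact sum_E_mul ((TensorProduct.mk ℂ (Mat N) (TT N)).compl₁₂ f
    ((TensorProduct.mk ℂ (Mat N) (Mat N)).flip (E N q.2 q.1))) (h (E N q.1 q.2))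

theorem sum_apply_mul_E_tmul {f g k : Mat N →ₗ[ℂ] Mat N}
    (hadj : ∀ X Y, (X * k Y).trace = -(g X * Y).trace) :
    ∑ p : Fin N × Fin N, ∑ q : Fin N × Fin N,
        f (k (E N p.1 p.2) * E N q.1 q.2) ⊗ₜ[ℂ] (E N p.2 p.1 ⊗ₜ[ℂ] E N q.2 q.1)
      = -(leg13 N (casimir f) * leg23 N (casimir g)) := by
  have hgk : ∀ X Y, ((-g) X * Y).trace = (X * k Y).trace := by simp [hadj]
  calc _ = ∑ q : Fin N × Fin N, ∑ p : Fin N × Fin N,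
        f (E N q.1 q.2) ⊗ₜ[ℂ] (E N p.2 p.1 ⊗ₜ[ℂ] (E N q.2 q.1 * k (E N p.1 p.2))) := by
        refine (Finset.sum_congr rfl fun p _ => ?_).trans Finset.sum_comm
        exact sum_mul_E ((TensorProduct.mk ℂ (Mat N) (TT N)).compl₁₂ f
          (TensorProduct.mk ℂ (Mat N) (Mat N) (E N p.2 p.1))) (k (E N p.1 p.2))
    _ = ∑ q : Fin N × Fin N, ∑ p : Fin N × Fin N,
        f (E N q.1 q.2) ⊗ₜ[ℂ] ((-g) (E N p.1 p.2) ⊗ₜ[ℂ] (E N q.2 q.1 * E N p.2 p.1)) := by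
        refine Finset.sum_congr rfl fun q _ => ?_
        let C := ((TensorProduct.mk ℂ (Mat N) (Mat N)).compl₂
          (LinearMap.mulLeft ℂ (E N q.2 q.1))).compr₂
            (TensorProduct.mk ℂ (Mat N) (TT N) (f (E N q.1 q.2)))
        exact (sum_E_swap fun x y => C y (k x)).trans (sum_apply_E_eq C hgk).symm
    _ = _ := by
        simp [leg13_casimir_mul_leg23_casimir, TensorProduct.neg_tmul, TensorProduct.tmul_neg]

theorem casimir_aybe {f g h k : Mat N →ₗ[ℂ] Mat N}
    (hres : ∀ x y, k x * h y = f (x * h y + k x * y))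
    (hadj : ∀ X Y, (X * k Y).trace = -(g X * Y).trace) :
    leg12 N (casimir k) * leg13 N (casimir h) - leg23 N (casimir h) * leg12 N (casimir f)
      + leg13 N (casimir f) * leg23 N (casimir g) = 0 := by
  rw [leg12_casimir_mul_leg13_casimir]
  simp only [hres, map_add, TensorProduct.add_tmul, Finset.sum_add_distrib,
    sum_apply_E_mul_tmul, sum_apply_mul_E_tmul hadj]
  abel

theorem nondegCoeff_of_surjective {f : Mat N →ₗ[ℂ] Mat N} (hf : Function.Surjective f) :
    NondegCoeff N (fun i j k l => f (E N l k) i j) := by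
  rw [NondegCoeff, ← Matrix.mulVec_surjective_iff_isUnit]
  intro t
  obtain ⟨X, hX⟩ := hf (Matrix.of fun i j => t (i, j))
  have hfX : f X = ∑ q : Fin N × Fin N, X q.2 q.1 • f (E N q.2 q.1) := by
    conv_lhs => rw [eq_sum_smul_E_swap X]
    simp only [map_sum, map_smul]
  refine ⟨fun q => X q.2 q.1, funext fun p => ?_⟩
  have h := congrArg (fun M : Mat N => M p.1 p.2) (hfX.symm.trans hX)
  simpa [Matrix.mulVec, dotProduct, Matrix.sum_apply, mul_comm] using h

end Casimir

theorem stmt9_general (N : ℕ) (a : Mat N) (c : ℂ)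
    (φ : ℂ → Mat N →ₗ[ℂ] Mat N)
    (hφ : ∀ w : ℂ, Function.Bijective (fun X : Mat N => w • X + a * X - X * a) →
      ∀ X : Mat N, w • (φ w) X + a * (φ w) X - (φ w) X * a = X)
    (r : ℂ → TT N)
    (hr : ∀ u : ℂ, r u = ∑ p : Fin N × Fin N, (φ (c * u)) (E N p.1 p.2) ⊗ₜ[ℂ] E N p.2 p.1) :
    {w : ℂ | ¬ Function.Bijective (fun X : Mat N => w • X + a * X - X * a)}.Finite
    ∧ (∀ u u' : ℂ,
        Function.Bijective (fun X : Mat N => (c * u) • X + a * X - X * a) →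
        Function.Bijective (fun X : Mat N => (c * u') • X + a * X - X * a) →
        Function.Bijective (fun X : Mat N => (c * (u + u')) • X + a * X - X * a) →
        Function.Bijective (fun X : Mat N => (c * (-u')) • X + a * X - X * a) →
        leg12 N (r (-u')) * leg13 N (r (u + u'))
          - leg23 N (r (u + u')) * leg12 N (r u)
          + leg13 N (r u) * leg23 N (r u') = 0)
    ∧ (∀ u : ℂ,
        Function.Bijective (fun X : Mat N => (c * u) • X + a * X - X * a) →
        Function.Bijective (fun X : Mat N => (c * (-u)) • X + a * X - X * a) →
        flip21 N (r (-u)) = - r u)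
    ∧ (∀ u : ℂ,
        Function.Bijective (fun X : Mat N => (c * u) • X + a * X - X * a) →
        NondegCoeff N (fun i j k l => ((φ (c * u)) (E N l k)) i j)) := by
  have hr' : ∀ u, r u = casimir (φ (c * u)) := hr
  have hinv : ∀ w, Function.Bijective (shiftedAd a w) →
      Function.RightInverse (φ w) (shiftedAd a w) := hφ
  have hadj : ∀ w w', w + w' = 0 → Function.Bijective (shiftedAd a w) →
      Function.Bijective (shiftedAd a w') → ∀ X Y, (X * φ w' Y).trace = -(φ w X * Y).trace :=
    fun w w' hw h h' => trace_mul_rightInverse_shiftedAd hw (hinv w h) (hinv w' h')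
  refine ⟨setOf_not_bijective_shiftedAd_finite a, ?_, ?_, ?_⟩
  · intro u u' hu hu' huu' hmu'
    simp only [hr']
    refine casimir_aybe (fun x y => ?_) (hadj _ _ (by ring) hu' hmu')
    exact mul_eq_of_rightInverse_shiftedAd (by ring) hu.injective (hinv _ hmu') (hinv _ huu')
      (hinv _ hu) x y
  · intro u hu hmu
    rw [hr', hr']
    exact flip21_casimir (hadj _ _ (by ring) hu hmu)
  · intro u hu
    exact nondegCoeff_of_surjective fun X => ⟨shiftedAd a (c * u) X, hu.injective (hinv _ hu _)⟩

/-- `r(u) = (φ_a(cu) ⊗ id)(P)` is a nondegenerate unitary solution of the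
`v`-independent AYBE, where `φ_a(w)` is the inverse of `X ↦ wX + [a, X]` (defined whenever
the latter is bijective, which holds for all but finitely many `w`). -/
theorem stmt9 (N : ℕ) (a : Mat N) (c : ℂ) (hc : c ≠ 0)
    (φ : ℂ → Mat N →ₗ[ℂ] Mat N)
    (hφ : ∀ w : ℂ, Function.Bijective (fun X : Mat N => w • X + a * X - X * a) →
      ∀ X : Mat N, w • (φ w) X + a * (φ w) X - (φ w) X * a = X)
    (r : ℂ → TT N)
    (hr : ∀ u : ℂ, r u = ∑ p : Fin N × Fin N, (φ (c * u)) (E N p.1 p.2) ⊗ₜ[ℂ] E N p.2 p.1) :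
    {w : ℂ | ¬ Function.Bijective (fun X : Mat N => w • X + a * X - X * a)}.Finite
    ∧ (∀ u u' : ℂ,
        Function.Bijective (fun X : Mat N => (c * u) • X + a * X - X * a) →
        Function.Bijective (fun X : Mat N => (c * u') • X + a * X - X * a) →
        Function.Bijective (fun X : Mat N => (c * (u + u')) • X + a * X - X * a) →
        Function.Bijective (fun X : Mat N => (c * (-u')) • X + a * X - X * a) →
        leg12 N (r (-u')) * leg13 N (r (u + u'))
          - leg23 N (r (u + u')) * leg12 N (r u)
          + leg13 N (r u) * leg23 N (r u') = 0)
    ∧ (∀ u : ℂ,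
        Function.Bijective (fun X : Mat N => (c * u) • X + a * X - X * a) →
        Function.Bijective (fun X : Mat N => (c * (-u)) • X + a * X - X * a) →
        flip21 N (r (-u)) = - r u)
    ∧ (∀ u : ℂ,
        Function.Bijective (fun X : Mat N => (c * u) • X + a * X - X * a) →
        NondegCoeff N (fun i j k l => ((φ (c * u)) (E N l k)) i j)) :=
  stmt9_general N a c φ hφ r hr
end
end

section
/- Let C : A × A → ℂ be a ℂ-bilinear map which is skew-symmetric (C(X,Y) = −C(Y,X) for all X, Y) and satisfies the cyclic cocycle condition C(XY,Z) + C(YZ,X) + C(ZX,Y) = 0 for all X, Y, Z ∈ A. Then there exists a matrix a ∈ A such that C(X,Y) = Tr(a·(XY − YX)) for all X, Y ∈ A. -/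
/-!
Write `E i j` for the matrix units and fix an index `i₀`. The cocycle identity applied to
`E i j = E i i₀ * E i₀ j`, together with skew-symmetry, gives
`C (E i j) (E k l) = δ j k * a l i - δ l i * a j k` with `a p q = C (E q i₀) (E i₀ p)`.
The form `(X, Y) ↦ Tr (a (XY - YX))` takes the same values on matrix units, so it is `C`.
-/

noncomputable section

namespace Matrix

lemma single_one_mul_single_one {n α : Type*} [Fintype n] [DecidableEq n] [Semiring α]
    (i j k l : n) :
    single i j (1 : α) * single k l 1 = if j = k then single i l 1 else 0 := by
  split_ifs with h
  · simp [h]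
  · simp [h]

variable {n R : Type*} [Fintype n] [CommRing R]

def commutatorTraceForm (a : Matrix n n R) : Matrix n n R →ₗ[R] Matrix n n R →ₗ[R] R :=
  LinearMap.compr₂ (LinearMap.mul R (Matrix n n R) - (LinearMap.mul R (Matrix n n R)).flip)
    (traceLinearMap n R R ∘ₗ LinearMap.mulLeft R a)

@[simp]
lemma commutatorTraceForm_apply (a X Y : Matrix n n R) :
    commutatorTraceForm a X Y = trace (a * (X * Y - Y * X)) := by
  simp [commutatorTraceForm]

variable [DecidableEq n]

lemma commutatorTraceForm_single_single (a : Matrix n n R) (i j k l : n) :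
    commutatorTraceForm a (single i j 1) (single k l 1) =
      (if j = k then a l i else 0) - (if l = i then a j k else 0) := by
  simp only [commutatorTraceForm_apply, single_one_mul_single_one, mul_sub, trace_sub]
  split_ifs <;> simp [trace_mul_single]

def cocycleMatrix (C : Matrix n n R →ₗ[R] Matrix n n R →ₗ[R] R) (i₀ : n) : Matrix n n R :=
  of fun p q => C (single q i₀ 1) (single i₀ p 1)

variable {C : Matrix n n R →ₗ[R] Matrix n n R →ₗ[R] R}
  (hskew : ∀ X Y, C X Y = -C Y X)
  (hcocycle : ∀ X Y Z, C (X * Y) Z + C (Y * Z) X + C (Z * X) Y = 0)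

include hskew hcocycle

lemma apply_single_single_eq_cocycleMatrix (i₀ i j k l : n) :
    C (single i j 1) (single k l 1) =
      (if j = k then cocycleMatrix C i₀ l i else 0) -
        (if l = i then cocycleMatrix C i₀ j k else 0) := by
  have h := hcocycle (single i i₀ 1) (single i₀ j 1) (single k l 1)
  simp only [single_one_mul_single_one] at h
  split_ifs at h ⊢ <;>
    simp only [cocycleMatrix, of_apply, map_zero, LinearMap.zero_apply,
      hskew (single i₀ l 1) (single i i₀ 1)] at h ⊢ <;>
    linear_combination h

theorem eq_commutatorTraceForm_cocycleMatrix (i₀ : n) :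
    C = commutatorTraceForm (cocycleMatrix C i₀) := by
  refine LinearMap.ext_basis (stdBasis R n n) (stdBasis R n n) fun ⟨i, j⟩ ⟨k, l⟩ => ?_
  rw [stdBasis_eq_single, stdBasis_eq_single, commutatorTraceForm_single_single,
    apply_single_single_eq_cocycleMatrix hskew hcocycle i₀]

theorem exists_apply_eq_trace_mul_commutator :
    ∃ a : Matrix n n R, ∀ X Y, C X Y = trace (a * (X * Y - Y * X)) := by
  obtain _ | ⟨⟨i₀⟩⟩ := isEmpty_or_nonempty n
  · exact ⟨0, fun X Y => by simp [Subsingleton.elim X 0]⟩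
  · refine ⟨cocycleMatrix C i₀, fun X Y => ?_⟩
    conv_lhs => rw [eq_commutatorTraceForm_cocycleMatrix hskew hcocycle i₀]
    exact commutatorTraceForm_apply _ X Y

end Matrix

/-- every skew-symmetric bilinear form on `Mat(N, ℂ)` satisfying the
cyclic cocycle condition `C(XY,Z) + C(YZ,X) + C(ZX,Y) = 0` is of the form
`C(X,Y) = Tr(a(XY − YX))` for some matrix `a`. -/
theorem stmt10 (N : ℕ)
    (C : Mat N →ₗ[ℂ] Mat N →ₗ[ℂ] ℂ)
    (hskew : ∀ X Y : Mat N, C X Y = - C Y X)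
    (hcocycle : ∀ X Y Z : Mat N, C (X * Y) Z + C (Y * Z) X + C (Z * X) Y = 0) :
    ∃ a : Mat N, ∀ X Y : Mat N, C X Y = Matrix.trace (a * (X * Y - Y * X)) :=
  Matrix.exists_apply_eq_trace_mul_commutator hskew hcocycle
end
end

section
/- Let S = {1,…,N} with its standard order, C0 the successor cyclic permutation, and (C, Γ1, Γ2) an associative BD-structure on S with α0 = (N,1) ∉ Γ2. For k ≥ 1 let P(k) ⊆ P_1 be the domain of τ^k, and set P(k)^+ = {(i,j) ∈ P(k) : i < j} and P(k)^− = {(i,j) ∈ P(k) : i > j}. Then for all i1, i2, i3 ∈ S and all k ≥ 1: (1) [(i1,i3) ∈ P(k)^− and i1 < i2] holds if and only if [(i1,i2) ∈ P(k)^+ and (i2,i3) ∈ P(k)^−]; (2) [(i1,i3) ∈ P(k)^− and i2 < i3] holds if and only if [(i1,i2) ∈ P(k)^− and (i2,i3) ∈ P(k)^+]. -/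
noncomputable section

variable {S : Type}

/-- Membership in `P_ι` (for `Γ = Γ_ι ⊆ Γ_{C0}`): pairs `(s, C0^m s)`, `m ≥ 1`, all of whose
intermediate edges lie in `Γ`. -/
def inP (C0 : Equiv.Perm S) (Γ : Set (S × S)) (p : S × S) : Prop :=
  ∃ m : ℕ, 1 ≤ m ∧ p.2 = (C0 ^ m) p.1 ∧
    ∀ j : ℕ, j < m → ((C0 ^ j) p.1, (C0 ^ (j + 1)) p.1) ∈ Γ

/-- `τ^k` is defined at `p` (i.e. `p ∈ P(k)`): `(C×C)^l p ∈ P_1` for all `0 ≤ l ≤ k-1`. -/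
def tauDef (C0 C : Equiv.Perm S) (Γ1 : Set (S × S)) (k : ℕ) (p : S × S) : Prop :=
  ∀ l : ℕ, l < k → inP C0 Γ1 ((C ^ l) p.1, (C ^ l) p.2)

/-- The successor cyclic permutation `C0` of `Fin N`. -/
def C0std (N : ℕ) [NeZero N] : Equiv.Perm (Fin N) := Equiv.addRight (1 : Fin N)

/-- `α0 = (N, 1)`, i.e. `(max, min)` of `Fin N`. -/
def alpha0 (N : ℕ) [NeZero N] : Fin N × Fin N := ((0 - 1 : Fin N), (0 : Fin N))

/-!
Since `Γ1 ⊊ Γ_{C0}`, a `Γ1`-walk along `C0` has length `< N`, so `(a, b) ∈ P_1` exactly when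
`a ≠ b` and the forward arc from `a` to `b`, of length `(b - a) mod N`, consists of `Γ1`-edges.
Since `C × C` maps `Γ1` into `Γ_{C0}`, `C` commutes with `C0` along such an arc. By induction on
`l`, for `(a, c) ∈ P(k)` every `(C^l a, C^l c)`, `l < k`, is an arc of the same length on which
`C^l` acts as a translation. Hence `(a, b), (b, c) ∈ P(k)` iff `(a, c) ∈ P(k)` and `b` lies
strictly inside the arc from `a` to `c`; both claims are this equivalence read off in the linear
order of `Fin N`.
-/

def IsWalk (C0 : Equiv.Perm S) (Γ : Set (S × S)) (a : S) (m : ℕ) : Prop :=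
  ∀ j < m, ((C0 ^ j) a, (C0 ^ (j + 1)) a) ∈ Γ

namespace IsWalk

variable {C0 : Equiv.Perm S} {Γ : Set (S × S)} {a : S} {m : ℕ}

theorem mono {m' : ℕ} (hw : IsWalk C0 Γ a m) (h : m' ≤ m) : IsWalk C0 Γ a m' :=
  fun j hj => hw j (hj.trans_le h)

theorem shift {s : ℕ} (hw : IsWalk C0 Γ a (s + m)) : IsWalk C0 Γ ((C0 ^ s) a) m := by
  intro j hj
  simpa only [← Equiv.Perm.mul_apply, ← pow_add, Nat.add_right_comm j 1 s] using
    hw (j + s) (by omega)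

theorem append {n : ℕ} (hw : IsWalk C0 Γ a m) (hw' : IsWalk C0 Γ ((C0 ^ m) a) n) :
    IsWalk C0 Γ a (m + n) := by
  intro j hj
  rcases lt_or_ge j m with hjm | hjm
  · exact hw j hjm
  · obtain ⟨i, rfl⟩ := Nat.exists_eq_add_of_le hjm
    simpa only [← Equiv.Perm.mul_apply, ← pow_add, add_comm, add_left_comm, add_assoc] using
      hw' i (by omega)

theorem map_pow_apply {C : Equiv.Perm S}
    (hcomm : ∀ x, (x, C0 x) ∈ Γ → C (C0 x) = C0 (C x)) (hw : IsWalk C0 Γ a m) :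
    ∀ j ≤ m, C ((C0 ^ j) a) = (C0 ^ j) (C a) := by
  intro j hj
  induction j with
  | zero => rfl
  | succ j ih =>
    have hedge := hw j hj
    rw [pow_succ', Equiv.Perm.mul_apply] at hedge ⊢
    rw [hcomm _ hedge, ih (by omega), Equiv.Perm.mul_apply]

theorem inP_split {s t : ℕ} (hw : IsWalk C0 Γ a (s + t)) (hs : 1 ≤ s) (ht : 1 ≤ t) :
    inP C0 Γ (a, (C0 ^ s) a) ∧ inP C0 Γ ((C0 ^ s) a, (C0 ^ (s + t)) a) :=
  ⟨⟨s, hs, rfl, hw.mono (by omega)⟩,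
    ⟨t, ht, by simp only [add_comm s, pow_add, Equiv.Perm.mul_apply], hw.shift⟩⟩

end IsWalk

theorem inP_trans {C0 : Equiv.Perm S} {Γ : Set (S × S)} {a b c : S}
    (hab : inP C0 Γ (a, b)) (hbc : inP C0 Γ (b, c)) : inP C0 Γ (a, c) := by
  obtain ⟨m, hm, hb : b = (C0 ^ m) a, hw : IsWalk C0 Γ a m⟩ := hab
  obtain ⟨n, -, hc : c = (C0 ^ n) b, hw'⟩ := hbc
  subst hb hc
  refine ⟨m + n, by omega, ?_, hw.append hw'⟩
  simp only [add_comm m, pow_add, Equiv.Perm.mul_apply]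

theorem tauDef_trans {C0 C : Equiv.Perm S} {Γ : Set (S × S)} {k : ℕ} {a b c : S}
    (hab : tauDef C0 C Γ k (a, b)) (hbc : tauDef C0 C Γ k (b, c)) : tauDef C0 C Γ k (a, c) :=
  fun l hl => inP_trans (hab l hl) (hbc l hl)

theorem tauDef.inP {C0 C : Equiv.Perm S} {Γ : Set (S × S)} {k : ℕ} {p : S × S}
    (H : tauDef C0 C Γ k p) (hk : 1 ≤ k) : inP C0 Γ p :=
  H 0 hk

theorem val_sub_cases {N : ℕ} (a b : Fin N) :
    (a ≤ b ∧ (b - a).val = b.val - a.val) ∨ (b < a ∧ (b - a).val = N + b.val - a.val) :=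
  (le_or_gt a b).imp (fun h => ⟨h, Fin.coe_sub_iff_le.2 h⟩)
    (fun h => ⟨h, Fin.coe_sub_iff_lt.2 h⟩)

section Cyclic

variable {N : ℕ} [NeZero N]

theorem val_sub_C0std_pow_apply (a : Fin N) (m : ℕ) : ((C0std N ^ m) a - a).val = m % N := by
  induction m with
  | zero => simp
  | succ m ih =>
    rw [pow_succ', Equiv.Perm.mul_apply]
    change ((C0std N ^ m) a + 1 - a).val = _
    rw [add_sub_right_comm, Fin.val_add, ih, Fin.val_one', Nat.add_mod_mod, Nat.mod_add_mod]

theorem C0std_pow_val_sub_apply (a b : Fin N) : (C0std N ^ (b - a).val) a = b := by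
  have h := val_sub_C0std_pow_apply a (b - a).val
  rw [Nat.mod_eq_of_lt (b - a).isLt] at h
  exact sub_left_injective (Fin.ext h)

theorem val_sub_C0std_pow_apply_of_lt (a : Fin N) {m : ℕ} (hm : m < N) :
    ((C0std N ^ m) a - a).val = m := by
  rw [val_sub_C0std_pow_apply, Nat.mod_eq_of_lt hm]

theorem one_le_val_sub_of_ne {a b : Fin N} (hab : a ≠ b) : 1 ≤ (b - a).val := by
  rw [Nat.one_le_iff_ne_zero, Fin.val_ne_zero_iff, sub_ne_zero]
  exact hab.symm

variable {Γ : Set (Fin N × Fin N)}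

/-- A walk of length `N` would use every edge of `C0`. -/
theorem IsWalk.lt_of_ssubset (hΓ : Γ ⊂ {p | p.2 = C0std N p.1}) {a : Fin N} {m : ℕ}
    (hw : IsWalk (C0std N) Γ a m) : m < N := by
  by_contra! hm
  refine hΓ.2 fun p (hp : p.2 = C0std N p.1) => ?_
  have h := hw (p.1 - a).val (by omega)
  rwa [pow_succ', Equiv.Perm.mul_apply, C0std_pow_val_sub_apply, ← hp] at h

theorem inP_iff_isWalk (hΓ : Γ ⊂ {p | p.2 = C0std N p.1}) {a b : Fin N} :
    inP (C0std N) Γ (a, b) ↔ a ≠ b ∧ IsWalk (C0std N) Γ a (b - a).val := by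
  constructor
  · rintro ⟨m, hm, hb : b = _, hw : IsWalk _ _ a m⟩
    have hval : (b - a).val = m := hb ▸ val_sub_C0std_pow_apply_of_lt a (hw.lt_of_ssubset hΓ)
    refine ⟨fun hab => ?_, hval ▸ hw⟩
    rw [hab, sub_self, Fin.val_zero] at hval
    omega
  · rintro ⟨hab, hw⟩
    exact ⟨(b - a).val, one_le_val_sub_of_ne hab, (C0std_pow_val_sub_apply a b).symm, hw⟩

theorem val_sub_add_val_sub_lt (hΓ : Γ ⊂ {p | p.2 = C0std N p.1}) {a b c : Fin N}
    (hab : inP (C0std N) Γ (a, b)) (hbc : inP (C0std N) Γ (b, c)) :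
    (b - a).val + (c - b).val < N := by
  obtain ⟨-, hw⟩ := (inP_iff_isWalk hΓ).1 hab
  obtain ⟨-, hw'⟩ := (inP_iff_isWalk hΓ).1 hbc
  exact (hw.append (by rwa [C0std_pow_val_sub_apply])).lt_of_ssubset hΓ

variable {C : Equiv.Perm (Fin N)}

theorem tauDef_isWalk_and_comm (hΓ : Γ ⊂ {p | p.2 = C0std N p.1})
    (hcomm : ∀ x, (x, C0std N x) ∈ Γ → C (C0std N x) = C0std N (C x))
    {k : ℕ} {a c : Fin N} (H : tauDef (C0std N) C Γ k (a, c)) {l : ℕ} (hl : l < k) :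
    IsWalk (C0std N) Γ ((C ^ l) a) (c - a).val ∧
      ∀ j ≤ (c - a).val, (C ^ l) ((C0std N ^ j) a) = (C0std N ^ j) ((C ^ l) a) := by
  set m := (c - a).val
  have walk_of_commute : ∀ l < k,
      (∀ j ≤ m, (C ^ l) ((C0std N ^ j) a) = (C0std N ^ j) ((C ^ l) a)) →
      IsWalk (C0std N) Γ ((C ^ l) a) m := fun l hl hc => by
    have hw := ((inP_iff_isWalk hΓ).1 (H l hl)).2
    rwa [← C0std_pow_val_sub_apply a c, hc m le_rfl,
      val_sub_C0std_pow_apply_of_lt _ (c - a).isLt] at hw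
  have commute : ∀ l < k, ∀ j ≤ m, (C ^ l) ((C0std N ^ j) a) = (C0std N ^ j) ((C ^ l) a) := by
    intro l hl
    induction l with
    | zero => exact fun _ _ => rfl
    | succ l ih =>
      intro j hj
      have hc := ih (by omega)
      rw [pow_succ', Equiv.Perm.mul_apply, Equiv.Perm.mul_apply, hc j hj,
        (walk_of_commute l (by omega) hc).map_pow_apply hcomm j hj]
  exact ⟨walk_of_commute l hl (commute l hl), commute l hl⟩

theorem tauDef_split (hΓ : Γ ⊂ {p | p.2 = C0std N p.1})
    (hcomm : ∀ x, (x, C0std N x) ∈ Γ → C (C0std N x) = C0std N (C x))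
    {k : ℕ} {a b c : Fin N} (H : tauDef (C0std N) C Γ k (a, c)) (hab : a ≠ b)
    (hlt : (b - a).val < (c - a).val) :
    tauDef (C0std N) C Γ k (a, b) ∧ tauDef (C0std N) C Γ k (b, c) := by
  obtain ⟨t, ht, hst⟩ : ∃ t, 1 ≤ t ∧ (b - a).val + t = (c - a).val :=
    ⟨(c - a).val - (b - a).val, by omega, by omega⟩
  have hsplit : ∀ l < k, inP (C0std N) Γ ((C ^ l) a, (C ^ l) b) ∧
      inP (C0std N) Γ ((C ^ l) b, (C ^ l) c) := by
    intro l hl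
    obtain ⟨hw, hcomm_l⟩ := tauDef_isWalk_and_comm hΓ hcomm H hl
    rw [← C0std_pow_val_sub_apply a b, ← C0std_pow_val_sub_apply a c, hcomm_l _ hlt.le,
      hcomm_l _ le_rfl, ← hst]
    exact (hw.mono hst.le).inP_split (one_le_val_sub_of_ne hab) ht
  exact ⟨fun l hl => (hsplit l hl).1, fun l hl => (hsplit l hl).2⟩

theorem tauDef_and_tauDef_iff (hΓ : Γ ⊂ {p | p.2 = C0std N p.1})
    (hcomm : ∀ x, (x, C0std N x) ∈ Γ → C (C0std N x) = C0std N (C x))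
    {k : ℕ} (hk : 1 ≤ k) {a b c : Fin N} (hab : a ≠ b) :
    tauDef (C0std N) C Γ k (a, b) ∧ tauDef (C0std N) C Γ k (b, c) ↔
      tauDef (C0std N) C Γ k (a, c) ∧ (b - a).val < (c - a).val := by
  refine ⟨fun ⟨H, H'⟩ => ⟨tauDef_trans H H', ?_⟩,
    fun ⟨H, hlt⟩ => tauDef_split hΓ hcomm H hab hlt⟩
  have hsum := val_sub_add_val_sub_lt hΓ (H.inP hk) (H'.inP hk)
  have hbc : b ≠ c := ((inP_iff_isWalk hΓ).1 (H'.inP hk)).1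
  have hca : (c - a).val = (b - a).val + (c - b).val := by
    rw [← sub_add_sub_cancel c b a, add_comm (c - b), Fin.val_add, Nat.mod_eq_of_lt hsum]
  have hpos := one_le_val_sub_of_ne hbc
  omega

end Cyclic

theorem stmt12_general (N : ℕ) [NeZero N]
    (C : Equiv.Perm (Fin N))
    (Γ1 Γ2 : Set (Fin N × Fin N))
    (hΓ1 : Γ1 ⊂ {p : Fin N × Fin N | p.2 = C0std N p.1})
    (hΓ2 : Γ2 ⊂ {p : Fin N × Fin N | p.2 = C0std N p.1})
    (hmap : (fun p : Fin N × Fin N => (C p.1, C p.2)) '' Γ1 = Γ2) :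
    ∀ (i1 i2 i3 : Fin N) (k : ℕ), 1 ≤ k →
      (((tauDef (C0std N) C Γ1 k (i1, i3) ∧ i3 < i1) ∧ i1 < i2)
        ↔ ((tauDef (C0std N) C Γ1 k (i1, i2) ∧ i1 < i2)
            ∧ (tauDef (C0std N) C Γ1 k (i2, i3) ∧ i3 < i2)))
      ∧ (((tauDef (C0std N) C Γ1 k (i1, i3) ∧ i3 < i1) ∧ i2 < i3)
        ↔ ((tauDef (C0std N) C Γ1 k (i1, i2) ∧ i2 < i1)
            ∧ (tauDef (C0std N) C Γ1 k (i2, i3) ∧ i2 < i3))) := by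
  have hcomm : ∀ x, (x, C0std N x) ∈ Γ1 → C (C0std N x) = C0std N (C x) := fun x hx =>
    hΓ2.1 (hmap ▸ Set.mem_image_of_mem _ hx)
  intro i1 i2 i3 k hk
  have arc_iff {b : Fin N} (hb : i1 ≠ b) := tauDef_and_tauDef_iff hΓ1 hcomm hk (c := i3) hb
  have hd12 := val_sub_cases i1 i2
  have hd13 := val_sub_cases i1 i3
  refine ⟨⟨?_, ?_⟩, ⟨?_, ?_⟩⟩
  · rintro ⟨⟨H13, h31⟩, h12⟩
    obtain ⟨H12, H23⟩ := (arc_iff h12.ne).2 ⟨H13, by omega⟩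
    exact ⟨⟨H12, h12⟩, H23, h31.trans h12⟩
  · rintro ⟨⟨H12, h12⟩, H23, h32⟩
    obtain ⟨H13, hlt⟩ := (arc_iff h12.ne).1 ⟨H12, H23⟩
    exact ⟨⟨H13, by omega⟩, h12⟩
  · rintro ⟨⟨H13, h31⟩, h23⟩
    obtain ⟨H12, H23⟩ := (arc_iff (h23.trans h31).ne').2 ⟨H13, by omega⟩
    exact ⟨⟨H12, h23.trans h31⟩, H23, h23⟩
  · rintro ⟨⟨H12, h21⟩, H23, h23⟩
    obtain ⟨H13, hlt⟩ := (arc_iff h21.ne').1 ⟨H12, H23⟩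
    exact ⟨⟨H13, by omega⟩, h23⟩

/-- Lemma `comb-lem1`: for an associative BD-structure on `{1,…,N}` with
`α0 ∉ Γ2`, membership of a triple in `P(k)^±` decomposes as stated. -/
theorem stmt12 (N : ℕ) [NeZero N]
    (C : Equiv.Perm (Fin N))
    (hC : ∀ s t : Fin N, ∃ k : ℕ, (C ^ k) s = t)
    (Γ1 Γ2 : Set (Fin N × Fin N))
    (hΓ1 : Γ1 ⊂ {p : Fin N × Fin N | p.2 = C0std N p.1})
    (hΓ2 : Γ2 ⊂ {p : Fin N × Fin N | p.2 = C0std N p.1})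
    (hmap : (fun p : Fin N × Fin N => (C p.1, C p.2)) '' Γ1 = Γ2)
    (hα0 : alpha0 N ∉ Γ2) :
    ∀ (i1 i2 i3 : Fin N) (k : ℕ), 1 ≤ k →
      (((tauDef (C0std N) C Γ1 k (i1, i3) ∧ i3 < i1) ∧ i1 < i2)
        ↔ ((tauDef (C0std N) C Γ1 k (i1, i2) ∧ i1 < i2)
            ∧ (tauDef (C0std N) C Γ1 k (i2, i3) ∧ i3 < i2)))
      ∧ (((tauDef (C0std N) C Γ1 k (i1, i3) ∧ i3 < i1) ∧ i2 < i3)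
        ↔ ((tauDef (C0std N) C Γ1 k (i1, i2) ∧ i2 < i1)
            ∧ (tauDef (C0std N) C Γ1 k (i2, i3) ∧ i2 < i3))) :=
  stmt12_general N C Γ1 Γ2 hΓ1 hΓ2 hmap
end
end

section
/- Let S = {1,…,N} with its standard order, C0 the successor cyclic permutation, and (C, Γ1, Γ2) an associative BD-structure on S with α0 = (N,1) ∉ Γ2. For k ≥ 1 let P(k) ⊆ P_1 be the domain of τ^k and P(k)^− = {(i,j) ∈ P(k) : i > j}. Then for every k ≥ 1 and every (i1, i2) ∈ P(k)^−, the set S is the disjoint union of S1 = {i ∈ S : i < i1 and C^k(i) > C^k(i1)} and S2 = {i ∈ S : i > i2 and C^k(i) < C^k(i2)}. -/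
noncomputable section

variable {S : Type}

/-!
Let `m` be the length of the arc from `i1` to `i2` that passes through `α0 = (N, 1)`. Since
`(i1, i2) ∈ P(k)`, each `(C×C)^l (i1, i2)` with `l < k` is again an arc of length `m` all of whose
edges lie in `Γ1`. `C×C` carries these edges into `Γ2`, which avoids `α0`, so `C` maps such an arc
onto an arc that does not wrap around. Hence `C^k` maps the wrapping arc `i1, …, N, 1, …, i2`
increasingly onto the integer interval `[C^k i1, C^k i2]`: the part `i ≥ i1` lands in `S2` and the
part `i ≤ i2` in `S1`. For `i2 < i < i1`, injectivity puts `C^k i` outside that interval, below it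
(`i ∈ S2`) or above it (`i ∈ S1`).
-/

open Fin.NatCast Function

namespace Fin

variable {N : ℕ} [NeZero N]

lemma val_add_natCast (a : Fin N) (j : ℕ) : (a + j).val = (a.val + j) % N := by
  rw [Fin.val_add, Fin.val_natCast, Nat.add_mod_mod]

lemma eq_add_natCast_of_val_eq {a b : Fin N} {j : ℕ} (h : b.val = a.val + j) : b = a + j :=
  Fin.ext <| by rw [val_add_natCast, ← h, Nat.mod_eq_of_lt b.isLt]

lemma val_add_one_of_add_one_ne_zero {x : Fin N} (h : x + 1 ≠ 0) : (x + 1).val = x.val + 1 := by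
  have hval : (x + 1).val = (x.val + 1) % N := by
    simpa using val_add_natCast x 1
  have hne : (x + 1).val ≠ 0 := Fin.val_ne_iff.2 h
  have hlt : x.val + 1 < N := by
    rcases Nat.lt_or_ge (x.val + 1) N with h | h
    · exact h
    · rw [show x.val + 1 = N by omega, Nat.mod_self] at hval; exact absurd hval hne
  rw [hval, Nat.mod_eq_of_lt hlt]

end Fin

variable {N : ℕ} [NeZero N]

lemma C0std_pow_apply (j : ℕ) (x : Fin N) : (C0std N ^ j) x = x + j := by
  induction j with
  | zero => simp
  | succ j ih =>
    rw [pow_succ', Equiv.Perm.mul_apply, ih, C0std, Equiv.coe_addRight, Nat.cast_succ]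
    exact add_assoc ..

lemma edges_of_inP {Γ : Set (Fin N × Fin N)} {s t : Fin N} (h : inP (C0std N) Γ (s, t)) :
    ∀ j < (t - s).val, (s + j, s + j + 1) ∈ Γ := by
  obtain ⟨m, -, ht, hedges⟩ := h
  intro j hj
  have hsub : (t - s).val = m % N := by
    rw [show t = s + m by simpa [C0std_pow_apply] using ht, add_sub_cancel_left, Fin.val_natCast]
  simpa [C0std_pow_apply, add_assoc] using hedges j (by have := Nat.mod_le m N; omega)

lemma val_apply_add_of_edges {C : Equiv.Perm (Fin N)} {Γ1 Γ2 : Set (Fin N × Fin N)}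
    (hΓ2 : Γ2 ⊆ {p : Fin N × Fin N | p.2 = C0std N p.1})
    (hmap : (fun p : Fin N × Fin N => (C p.1, C p.2)) '' Γ1 = Γ2) (hα0 : alpha0 N ∉ Γ2)
    {s : Fin N} {m : ℕ} (hedges : ∀ j < m, (s + j, s + j + 1) ∈ Γ1) :
    ∀ j ≤ m, (C (s + j)).val = (C s).val + j
  | 0, _ => by simp
  | j + 1, hj => by
    set x := C (s + j)
    have hedge : (x, C (s + j + 1)) ∈ Γ2 := hmap ▸ ⟨_, hedges j (by omega), rfl⟩
    have hsucc : C (s + j + 1) = x + 1 := hΓ2 hedge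
    have hx : x + 1 ≠ 0 := fun h => hα0 <| by
      rwa [alpha0, ← h, add_sub_cancel_right, ← hsucc]
    rw [Nat.cast_succ, ← add_assoc, hsucc, Fin.val_add_one_of_add_one_ne_zero hx,
      val_apply_add_of_edges hΓ2 hmap hα0 hedges j (by omega), add_assoc]

lemma val_pow_succ_apply_add_of_tauDef {C : Equiv.Perm (Fin N)} {Γ1 Γ2 : Set (Fin N × Fin N)}
    (hΓ2 : Γ2 ⊆ {p : Fin N × Fin N | p.2 = C0std N p.1})
    (hmap : (fun p : Fin N × Fin N => (C p.1, C p.2)) '' Γ1 = Γ2) (hα0 : alpha0 N ∉ Γ2)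
    {s t : Fin N} :
    ∀ k : ℕ, tauDef (C0std N) C Γ1 (k + 1) (s, t) →
      ∀ j ≤ (t - s).val, ((C ^ (k + 1)) (s + j)).val = ((C ^ (k + 1)) s).val + j
  | 0, htau => by
    simpa using val_apply_add_of_edges hΓ2 hmap hα0 (edges_of_inP (by simpa using htau 0 one_pos))
  | k + 1, htau => by
    have ih := val_pow_succ_apply_add_of_tauDef hΓ2 hmap hα0 k fun l hl => htau l (by omega)
    have hshift : ∀ j ≤ (t - s).val, (C ^ (k + 1)) (s + j) = (C ^ (k + 1)) s + j :=
      fun j hj => Fin.eq_add_natCast_of_val_eq (ih j hj)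
    have hCt : (C ^ (k + 1)) t = (C ^ (k + 1)) s + ((t - s).val : ℕ) := by
      rw [← hshift _ le_rfl, Fin.cast_val_eq_self, add_sub_cancel]
    have hlen : ((C ^ (k + 1)) t - (C ^ (k + 1)) s).val = (t - s).val := by
      rw [hCt, add_sub_cancel_left, Fin.val_natCast, Nat.mod_eq_of_lt (t - s).isLt]
    have hedges := hlen ▸ edges_of_inP (htau (k + 1) (by omega))
    intro j hj
    rw [pow_succ', Equiv.Perm.mul_apply, Equiv.Perm.mul_apply, hshift j hj]
    exact val_apply_add_of_edges hΓ2 hmap hα0 hedges j hj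

lemma lt_and_lt_iff_not_lt_and_lt_of_wrapping_arc {f : Fin N → Fin N} (hf : Injective f)
    {i1 i2 : Fin N} (hlt : i2 < i1)
    (harc : ∀ j ≤ (i2 - i1).val, (f (i1 + j)).val = (f i1).val + j) (i : Fin N) :
    (i < i1 ∧ f i1 < f i) ↔ ¬ (i2 < i ∧ f i < f i2) := by
  set m := (i2 - i1).val
  have hm : m = N + i2 - i1 := Fin.coe_sub_iff_lt.2 hlt
  have hf2 : (f i2).val = (f i1).val + m := by
    simpa [m] using harc m le_rfl
  have hi : i1 + ((i - i1).val : ℕ) = i := by rw [Fin.cast_val_eq_self, add_sub_cancel]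
  have hoff : (i - i1).val = if i1 ≤ i then i.val - i1.val else N + i.val - i1.val := by
    split_ifs with h
    exacts [Fin.sub_val_of_le h, Fin.coe_sub_iff_lt.2 (not_le.1 h)]
  have := i.isLt
  simp only [Fin.lt_def] at hlt ⊢
  by_cases hin : (i - i1).val ≤ m
  · have hfi := harc _ hin
    rw [hi] at hfi
    split_ifs at hoff <;> omega
  · -- `f` is injective and already hits every value of `[f i1, f i2]` on the arc
    have hout : ¬ ((f i1).val ≤ (f i).val ∧ (f i).val ≤ (f i2).val) := by
      rintro ⟨h1, h2⟩
      have hj : (f i).val - (f i1).val ≤ m := by omega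
      have hfj := harc _ hj
      have hij : i1 + (((f i).val - (f i1).val : ℕ) : Fin N) = i := hf (Fin.ext (by omega))
      apply hin
      rw [← hij, add_sub_cancel_left, Fin.val_natCast, Nat.mod_eq_of_lt (by omega)]
      exact hj
    split_ifs at hoff <;> omega

theorem stmt13_general (N : ℕ) [NeZero N]
    (C : Equiv.Perm (Fin N))
    (Γ1 Γ2 : Set (Fin N × Fin N))
    (hΓ2 : Γ2 ⊂ {p : Fin N × Fin N | p.2 = C0std N p.1})
    (hmap : (fun p : Fin N × Fin N => (C p.1, C p.2)) '' Γ1 = Γ2)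
    (hα0 : alpha0 N ∉ Γ2) :
    ∀ (k : ℕ), 1 ≤ k → ∀ i1 i2 : Fin N,
      tauDef (C0std N) C Γ1 k (i1, i2) → i2 < i1 →
      ∀ i : Fin N,
        (i < i1 ∧ (C ^ k) i1 < (C ^ k) i) ↔ ¬ (i2 < i ∧ (C ^ k) i < (C ^ k) i2) := by
  intro k hk i1 i2 htau hlt
  obtain ⟨k, rfl⟩ : ∃ k', k = k' + 1 := ⟨k - 1, by omega⟩
  exact lt_and_lt_iff_not_lt_and_lt_of_wrapping_arc (C ^ (k + 1)).injective hlt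
    (val_pow_succ_apply_add_of_tauDef hΓ2.subset hmap hα0 k htau)

/-- Lemma `comb-lem2`: for every `k ≥ 1` and `(i1,i2) ∈ P(k)⁻`, the set
`S = {1,…,N}` is the disjoint union of `S1 = {i : i < i1, C^k i > C^k i1}` and
`S2 = {i : i > i2, C^k i < C^k i2}`. -/
theorem stmt13 (N : ℕ) [NeZero N]
    (C : Equiv.Perm (Fin N))
    (hC : ∀ s t : Fin N, ∃ k : ℕ, (C ^ k) s = t)
    (Γ1 Γ2 : Set (Fin N × Fin N))
    (hΓ1 : Γ1 ⊂ {p : Fin N × Fin N | p.2 = C0std N p.1})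
    (hΓ2 : Γ2 ⊂ {p : Fin N × Fin N | p.2 = C0std N p.1})
    (hmap : (fun p : Fin N × Fin N => (C p.1, C p.2)) '' Γ1 = Γ2)
    (hα0 : alpha0 N ∉ Γ2) :
    ∀ (k : ℕ), 1 ≤ k → ∀ i1 i2 : Fin N,
      tauDef (C0std N) C Γ1 k (i1, i2) → i2 < i1 →
      ∀ i : Fin N,
        (i < i1 ∧ (C ^ k) i1 < (C ^ k) i) ↔ ¬ (i2 < i ∧ (C ^ k) i < (C ^ k) i2) :=
  stmt13_general N C Γ1 Γ2 hΓ2 hmap hα0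
end
end

section
/- Let (C0, C, Γ1, Γ2) be an associative BD-structure on a finite set S. Then for every γ ∈ Γ1 there exists k ≥ 1 such that (C×C)^k(γ) ∉ Γ1. Consequently, for every α ∈ P_1 there exists k ≥ 1 such that τ^k is not defined at α. -/
noncomputable section

variable {S : Type}

/-- nilpotency: for an associative BD-structure, every `γ ∈ Γ1` leaves
`Γ1` under some power of `C×C`, and consequently `τ^k` is eventually undefined at every
`α ∈ P_1`. -/
theorem stmt17 (S : Type) [Fintype S] [DecidableEq S]
    (C0 C : Equiv.Perm S)
    (hC0 : ∀ s t : S, ∃ k : ℕ, (C0 ^ k) s = t)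
    (hC : ∀ s t : S, ∃ k : ℕ, (C ^ k) s = t)
    (Γ1 Γ2 : Set (S × S))
    (hΓ1 : Γ1 ⊂ {p : S × S | p.2 = C0 p.1})
    (hΓ2 : Γ2 ⊂ {p : S × S | p.2 = C0 p.1})
    (hmap : (fun p : S × S => (C p.1, C p.2)) '' Γ1 = Γ2) :
    (∀ γ ∈ Γ1, ∃ k : ℕ, 1 ≤ k ∧ ((C ^ k) γ.1, (C ^ k) γ.2) ∉ Γ1)
    ∧ (∀ α : S × S, inP C0 Γ1 α → ∃ k : ℕ, 1 ≤ k ∧ ¬ tauDef C0 C Γ1 k α) := by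
  -- Key: if the base edge at `s` is in `Γ1`, some `C`-shift of the base edge escapes `Γ1`.
  have key : ∀ s : S, (s, C0 s) ∈ Γ1 →
      ∃ k : ℕ, 1 ≤ k ∧ ((C ^ k) s, C0 ((C ^ k) s)) ∉ Γ1 := by
    intro s hs
    by_contra h
    push_neg at h
    have hall : ∀ k : ℕ, ((C ^ k) s, C0 ((C ^ k) s)) ∈ Γ1 := by
      intro k
      rcases Nat.eq_zero_or_pos k with rfl | hk
      · simpa using hs
      · exact h k hk
    apply hΓ1.2
    intro p hp
    obtain ⟨k, hk⟩ := hC s p.1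
    have : ((C ^ k) s, C0 ((C ^ k) s)) ∈ Γ1 := hall k
    rw [hk] at this
    have hp' : p = (p.1, C0 p.1) := by
      ext
      · rfl
      · exact hp
    rw [hp']
    exact this
  constructor
  · intro γ hγ
    have hγ2 : γ.2 = C0 γ.1 := hΓ1.1 hγ
    obtain ⟨k, hk1, hk⟩ := key γ.1 (by rw [← hγ2]; exact hγ)
    refine ⟨k, hk1, fun hmem => hk ?_⟩
    have h2 : (C ^ k) γ.2 = C0 ((C ^ k) γ.1) := hΓ1.1 hmem
    rw [← h2]
    exact hmem
  · intro α hα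
    obtain ⟨m, hm1, -, hedges⟩ := hα
    have hbase : (α.1, C0 α.1) ∈ Γ1 := by
      have := hedges 0 hm1
      simpa using this
    obtain ⟨k, hk1, hk⟩ := key α.1 hbase
    refine ⟨k + 1, by omega, fun htau => ?_⟩
    obtain ⟨m', hm'1, -, hedges'⟩ := htau k (by omega)
    have := hedges' 0 hm'1
    simp only [pow_zero, pow_one, Equiv.Perm.coe_one, id_eq] at this
    exact hk this
end
end

section
/- Let D ⊆ ℂ be an open disk centered at 0 and let φ : D ∖ {0} → End_ℂ(A) be holomorphic and not identically zero, satisfying the multiplicativity identity φ(u1+u2)(X·Y) = φ(u1)(X)·φ(u2)(Y) for all X, Y ∈ A and all u1, u2 ∈ D ∖ {0} with u1+u2 ∈ D ∖ {0}. Then there exist λ ∈ ℂ and an invertible matrix T ∈ GL_N(ℂ) such that φ(u)(X) = exp(λu)·T·X·T^{-1} for all u ∈ D ∖ {0} and all X ∈ A. In particular every φ(u) is an invertible linear map and φ extends holomorphically to all of D. -/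
/-!
On the punctured disk the multiplicativity identity, read through the identity theorem, gives
`φ(u)(X) φ(v)(1) = φ(u)(1) φ(v)(X)` for all `u, v`. A nonzero kernel vector of some `φ(u)` would
make every `φ(v)` vanish on the two-sided ideal it generates, which is everything, so every `φ(u)`
is injective and `φ(u)(1)` is invertible. Hence `φ(u) = φ(u)(1) · α` for one algebra automorphism
`α` of the matrix algebra, which is inner by Skolem–Noether; `φ(u)(1)` is then central, i.e. a
scalar `c(u)` with `c(u + v) = c(u) c(v)`. Such a `c` has constant logarithmic derivative, so
`c(u) = exp(λu)`.
-/

noncomputable section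

open Set Metric Filter Topology

theorem isPreconnected_ball_diff_zero (ε : ℝ) : IsPreconnected (ball (0 : ℂ) ε \ {0}) := by
  have hpolar : (fun p : ℝ × ℝ => (p.1 : ℂ) * Complex.exp (p.2 * Complex.I)) '' (Ioo 0 ε ×ˢ univ)
      = ball (0 : ℂ) ε \ {0} := by
    ext z
    constructor
    · rintro ⟨⟨r, θ⟩, ⟨⟨hr0, hrε⟩, -⟩, rfl⟩
      have hnorm : ‖(r : ℂ) * Complex.exp (θ * Complex.I)‖ = r := by
        rw [norm_mul, Complex.norm_exp_ofReal_mul_I, mul_one, Complex.norm_real,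
          Real.norm_of_nonneg hr0.le]
      refine ⟨by rwa [mem_ball_zero_iff, hnorm], fun h => hr0.ne' ?_⟩
      simpa [hnorm] using congrArg norm (mem_singleton_iff.mp h)
    · rintro ⟨hz, hz0⟩
      exact ⟨(‖z‖, z.arg), ⟨⟨norm_pos_iff.mpr hz0, mem_ball_zero_iff.mp hz⟩, mem_univ _⟩,
        Complex.norm_mul_exp_arg_mul_I z⟩
  rw [← hpolar]
  exact ((convex_Ioo 0 ε).prod convex_univ).isPreconnected.image _ (by fun_prop)

theorem half_mem_ball_diff_zero {ε : ℝ} {u : ℂ} (hu : u ∈ ball (0 : ℂ) ε \ {0}) :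
    u / 2 ∈ ball (0 : ℂ) ε \ {0} := by
  obtain ⟨hu, hu0⟩ := hu
  rw [mem_ball_zero_iff] at hu
  refine ⟨?_, by simpa using hu0⟩
  rw [mem_ball_zero_iff, norm_div, Complex.norm_two]
  linarith [norm_nonneg u]

theorem neg_mem_ball_diff_zero {ε : ℝ} {u : ℂ} (hu : u ∈ ball (0 : ℂ) ε \ {0}) :
    -u ∈ ball (0 : ℂ) ε \ {0} := by
  simpa using hu

theorem eventually_mem_and_add_mem_ball_diff_zero {ε : ℝ} {a w₀ : ℂ}
    (hw₀ : w₀ ∈ ball (0 : ℂ) ε \ {0}) (haw₀ : a + w₀ ∈ ball (0 : ℂ) ε \ {0}) :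
    ∀ᶠ w in 𝓝 w₀, w ∈ ball (0 : ℂ) ε \ {0} ∧ a + w ∈ ball (0 : ℂ) ε \ {0} :=
  have hU : IsOpen (ball (0 : ℂ) ε \ {0}) := isOpen_ball.sdiff isClosed_singleton
  Filter.Eventually.and (hU.mem_nhds hw₀)
    ((continuous_const.add continuous_id).continuousAt.eventually_mem (hU.mem_nhds haw₀))

theorem eqOn_ball_diff_zero_of_eventuallyEq {E : Type*} [NormedAddCommGroup E]
    [NormedSpace ℂ E] [CompleteSpace E] {ε : ℝ} {f g : ℂ → E}
    (hf : DifferentiableOn ℂ f (ball 0 ε \ {0})) (hg : DifferentiableOn ℂ g (ball 0 ε \ {0}))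
    {z₀ : ℂ} (hz₀ : z₀ ∈ ball (0 : ℂ) ε \ {0}) (hfg : f =ᶠ[𝓝 z₀] g) :
    EqOn f g (ball 0 ε \ {0}) :=
  have hU : IsOpen (ball (0 : ℂ) ε \ {0}) := isOpen_ball.sdiff isClosed_singleton
  (hf.analyticOnNhd hU).eqOn_of_preconnected_of_eventuallyEq (hg.analyticOnNhd hU)
    (isPreconnected_ball_diff_zero ε) hz₀ hfg

theorem exists_eq_mul_exp_of_deriv_eq {U : Set ℂ} (hU : IsOpen U) (hU' : IsPreconnected U)
    {f : ℂ → ℂ} (hf : DifferentiableOn ℂ f U) {lam : ℂ} (hf' : ∀ u ∈ U, deriv f u = lam * f u) :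
    ∃ K, ∀ u ∈ U, f u = K * Complex.exp (lam * u) := by
  have hg : ∀ u ∈ U, HasDerivAt (fun w => f w * Complex.exp (-(lam * w))) 0 u := by
    intro u hu
    have hfu := (hf.differentiableAt (hU.mem_nhds hu)).hasDerivAt
    rw [hf' u hu] at hfu
    exact (hfu.fun_mul ((hasDerivAt_id' u).const_mul lam).fun_neg.cexp).congr_deriv (by ring)
  obtain ⟨K, hK⟩ := hU.exists_is_const_of_deriv_eq_zero hU'
    (fun u hu => (hg u hu).differentiableAt.differentiableWithinAt) (fun u hu => (hg u hu).deriv)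
  refine ⟨K, fun u hu => ?_⟩
  rw [← hK u hu, mul_assoc, ← Complex.exp_add, neg_add_cancel, Complex.exp_zero, mul_one]

theorem exists_deriv_eq_mul_of_map_add {ε : ℝ} {f : ℂ → ℂ}
    (hf : DifferentiableOn ℂ f (ball 0 ε \ {0})) (hf0 : ∀ u ∈ ball (0 : ℂ) ε \ {0}, f u ≠ 0)
    (hadd : ∀ u v, u ∈ ball (0 : ℂ) ε \ {0} → v ∈ ball (0 : ℂ) ε \ {0} →
      u + v ∈ ball (0 : ℂ) ε \ {0} → f (u + v) = f u * f v) :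
    ∃ lam, ∀ u ∈ ball (0 : ℂ) ε \ {0}, deriv f u = lam * f u := by
  set S := ball (0 : ℂ) ε \ {0}
  have hderiv : ∀ u v, u ∈ S → v ∈ S → u + v ∈ S → deriv f (u + v) = deriv f u * f v := by
    intro u v hu hv huv
    have hfu : DifferentiableAt ℂ f u :=
      hf.differentiableAt ((isOpen_ball.sdiff isClosed_singleton).mem_nhds hu)
    have hev : (fun w => f (w + v)) =ᶠ[𝓝 u] fun w => f w * f v := by
      filter_upwards [eventually_mem_and_add_mem_ball_diff_zero hu (by rwa [add_comm])]
        with w ⟨hw, hvw⟩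
      exact hadd w v hw hv (by rwa [add_comm])
    rw [← deriv_comp_add_const, hev.deriv_eq, deriv_mul_const hfu]
  set L := fun u => deriv f u / f u
  have hL : ∀ u v, u ∈ S → v ∈ S → u + v ∈ S → L (u + v) = L u := by
    intro u v hu hv huv
    simp only [L, hderiv u v hu hv huv, hadd u v hu hv huv, mul_div_mul_right _ _ (hf0 v hv)]
  have hL_half : ∀ u ∈ S, L u = L (u / 2) := fun u hu => by
    have h := half_mem_ball_diff_zero hu
    rw [← hL (u / 2) (u / 2) h h (by rwa [add_halves]), add_halves]
  -- After halving, any two distinct points of the disk differ by a translation in the disk.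
  have hL_const : ∀ u ∈ S, ∀ w ∈ S, L w = L u := by
    intro u hu w hw
    obtain rfl | hne := eq_or_ne u w
    · rfl
    have hdiff : w / 2 - u / 2 ∈ S := by
      refine ⟨?_, sub_ne_zero.mpr (by simpa using hne.symm)⟩
      rw [mem_ball_zero_iff, ← sub_div, norm_div, Complex.norm_two]
      linarith [norm_sub_le w u, mem_ball_zero_iff.mp hu.1, mem_ball_zero_iff.mp hw.1]
    have h := hL (u / 2) _ (half_mem_ball_diff_zero hu) hdiff
      (by rw [add_sub_cancel]; exact half_mem_ball_diff_zero hw)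
    rw [add_sub_cancel] at h
    rw [hL_half u hu, hL_half w hw, h]
  rcases S.eq_empty_or_nonempty with hS | ⟨u₀, hu₀⟩
  · exact ⟨0, by simp [hS]⟩
  refine ⟨L u₀, fun u hu => ?_⟩
  rw [← hL_const u₀ hu₀ u hu, div_mul_cancel₀ _ (hf0 u hu)]

theorem exists_eq_exp_of_map_add {ε : ℝ} {f : ℂ → ℂ}
    (hf : DifferentiableOn ℂ f (ball 0 ε \ {0})) (hf0 : ∀ u ∈ ball (0 : ℂ) ε \ {0}, f u ≠ 0)
    (hadd : ∀ u v, u ∈ ball (0 : ℂ) ε \ {0} → v ∈ ball (0 : ℂ) ε \ {0} →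
      u + v ∈ ball (0 : ℂ) ε \ {0} → f (u + v) = f u * f v) :
    ∃ lam, ∀ u ∈ ball (0 : ℂ) ε \ {0}, f u = Complex.exp (lam * u) := by
  obtain ⟨lam, hlam⟩ := exists_deriv_eq_mul_of_map_add hf hf0 hadd
  obtain ⟨K, hK⟩ := exists_eq_mul_exp_of_deriv_eq (isOpen_ball.sdiff isClosed_singleton)
    (isPreconnected_ball_diff_zero ε) hf hlam
  refine ⟨lam, fun u hu => ?_⟩
  have hh := half_mem_ball_diff_zero hu
  have hsq : K * Complex.exp (lam * u) = K * K * Complex.exp (lam * u) := by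
    rw [← hK u hu, ← add_halves u, hadd _ _ hh hh (by rwa [add_halves]), hK _ hh, add_halves,
      show lam * u = lam * (u / 2) + lam * (u / 2) by ring, Complex.exp_add]
    ring
  have hK0 : K ≠ 0 := by
    rintro rfl
    exact hf0 u hu (by rw [hK u hu, zero_mul])
  have hK1 : K = 1 := (mul_eq_left₀ hK0).mp (mul_right_cancel₀ (Complex.exp_ne_zero _) hsq).symm
  rw [hK u hu, hK1, one_mul]

theorem AddMonoidHom.eq_zero_of_map_mul_mul_eq_zero {R M : Type*} [Ring R] [IsSimpleRing R]
    [AddCommGroup M] (f : R →+ M) {y : R} (hy : y ≠ 0) (h : ∀ a b, f (a * y * b) = 0) :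
    f = 0 := by
  have hone : (1 : R) ∈ TwoSidedIdeal.span {y} :=
    IsSimpleRing.one_mem_of_ne_zero_mem _ hy (TwoSidedIdeal.subset_span rfl)
  ext z
  have hz := TwoSidedIdeal.mul_mem_left _ z _ hone
  rw [mul_one, TwoSidedIdeal.mem_span_iff_mem_addSubgroup_closure] at hz
  refine (AddSubgroup.closure_le f.ker).2 ?_ hz
  rintro _ ⟨_, ⟨a, -, _, rfl, rfl⟩, b, -, rfl⟩
  exact h a b

theorem Matrix.exists_isUnit_conj_of_algEquiv {K n : Type*} [Field K] [Fintype n] [DecidableEq n]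
    (f : Matrix n n K ≃ₐ[K] Matrix n n K) :
    ∃ T : Matrix n n K, IsUnit T ∧ ∀ X, f X = T * X * T⁻¹ := by
  let g := (Matrix.toLinAlgEquiv'.symm.trans f).trans Matrix.toLinAlgEquiv'
  obtain ⟨T, hT⟩ := g.eq_linearEquivConjAlgEquiv
  have hTT : LinearMap.toMatrixAlgEquiv' T.toLinearMap *
      LinearMap.toMatrixAlgEquiv' T.symm.toLinearMap = 1 := by
    rw [← map_mul, Module.End.mul_eq_comp, T.comp_symm, ← Module.End.one_eq_id, map_one]
  refine ⟨LinearMap.toMatrixAlgEquiv' T.toLinearMap,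
    (Matrix.isUnit_iff_isUnit_det _).mpr (Matrix.isUnit_det_of_right_inverse hTT), fun X => ?_⟩
  rw [Matrix.inv_eq_right_inv hTT]
  apply Matrix.toLinAlgEquiv'.injective
  have hX := DFunLike.congr_fun hT (Matrix.toLinAlgEquiv' X)
  simp only [g, AlgEquiv.trans_apply, AlgEquiv.symm_apply_apply,
    LinearEquiv.conjAlgEquiv_apply] at hX
  rw [hX, map_mul, map_mul]
  simp [Module.End.mul_eq_comp, LinearMap.comp_assoc]

theorem Matrix.eq_smul_one_of_forall_commute {R n : Type*} [CommRing R] [Fintype n] [DecidableEq n]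
    {B : Matrix n n R} (hB : ∀ X, Commute B X) (i : n) : B = B i i • 1 := by
  obtain ⟨r, rfl⟩ := Matrix.mem_range_scalar_of_commute_single fun _ _ _ => (hB _).symm
  simp [Matrix.smul_one_eq_diagonal]

def IsMultiplicativeOn {n : Type*} [Fintype n] (φ : ℂ → Matrix n n ℂ →ₗ[ℂ] Matrix n n ℂ)
    (s : Set ℂ) : Prop :=
  ∀ u v, u ∈ s → v ∈ s → u + v ∈ s → ∀ X Y, φ (u + v) (X * Y) = φ u X * φ v Y

section MultiplicativeFamily

-- Any norm gives the same holomorphic functions; this one makes products of holomorphic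
-- matrix families holomorphic.
attribute [local instance] Matrix.linftyOpNormedRing Matrix.linftyOpNormedAlgebra

variable {n : Type*} [Fintype n] [DecidableEq n] {ε : ℝ}
  {φ : ℂ → Matrix n n ℂ →ₗ[ℂ] Matrix n n ℂ}

theorem Matrix.differentiableOn_of_forall_apply {s : Set ℂ} {f : ℂ → Matrix n n ℂ}
    (hf : ∀ i j, DifferentiableOn ℂ (fun u => f u i j) s) : DifferentiableOn ℂ f s := by
  have hsum : f = fun u => ∑ i, ∑ j, f u i j • Matrix.single i j (1 : ℂ) := by
    ext u : 1
    simp_rw [Matrix.smul_single, smul_eq_mul, mul_one]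
    exact Matrix.matrix_eq_sum_single (f u)
  rw [hsum]
  exact DifferentiableOn.fun_sum fun i _ => DifferentiableOn.fun_sum fun j _ =>
    (hf i j).smul_const _

theorem map_mul_map_one_comm (hhol : ∀ X, DifferentiableOn ℂ (fun u => φ u X) (ball 0 ε \ {0}))
    (hmul : IsMultiplicativeOn φ (ball 0 ε \ {0})) {u v : ℂ} (hu : u ∈ ball (0 : ℂ) ε \ {0})
    (hv : v ∈ ball (0 : ℂ) ε \ {0}) (X : Matrix n n ℂ) :
    φ u X * φ v 1 = φ u 1 * φ v X := by
  have hw := neg_mem_ball_diff_zero (half_mem_ball_diff_zero hu)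
  have huw : u + -(u / 2) ∈ ball (0 : ℂ) ε \ {0} := by
    rw [show u + -(u / 2) = u / 2 by ring]; exact half_mem_ball_diff_zero hu
  refine eqOn_ball_diff_zero_of_eventuallyEq ((hhol 1).const_mul _) ((hhol X).const_mul _) hw
    ?_ hv
  filter_upwards [eventually_mem_and_add_mem_ball_diff_zero hw huw] with w ⟨hw, huw⟩
  rw [← hmul u w hu hw huw, ← hmul u w hu hw huw, mul_one, one_mul]

theorem injective_of_exists_ne_zero [Nonempty n]
    (hhol : ∀ X, DifferentiableOn ℂ (fun u => φ u X) (ball 0 ε \ {0}))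
    (hmul : IsMultiplicativeOn φ (ball 0 ε \ {0})) (hne : ∃ u ∈ ball (0 : ℂ) ε \ {0}, φ u ≠ 0)
    {u : ℂ} (hu : u ∈ ball (0 : ℂ) ε \ {0}) : Function.Injective (φ u) := by
  obtain ⟨u₀, hu₀, hφu₀⟩ := hne
  refine (injective_iff_map_eq_zero (φ u)).mpr fun Y hY => ?_
  by_contra hY0
  have hw := half_mem_ball_diff_zero hu
  have huw : -u + u / 2 ∈ ball (0 : ℂ) ε \ {0} := by
    rw [show -u + u / 2 = -(u / 2) by ring]; exact neg_mem_ball_diff_zero hw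
  have hvanish : ∀ X, EqOn (fun v => φ v (X * Y)) 0 (ball 0 ε \ {0}) := fun X =>
    eqOn_ball_diff_zero_of_eventuallyEq (hhol _) (differentiableOn_const 0) hw <| by
      filter_upwards [eventually_mem_and_add_mem_ball_diff_zero hw huw] with w ⟨hw, huw⟩
      have := hmul _ _ huw hu (by rwa [neg_add_cancel_comm]) X Y
      rwa [neg_add_cancel_comm, hY, mul_zero] at this
  apply hφu₀
  have hh := half_mem_ball_diff_zero hu₀
  refine LinearMap.ext fun Z => DFunLike.congr_fun
    ((φ u₀).toAddMonoidHom.eq_zero_of_map_mul_mul_eq_zero hY0 fun A B => ?_) Z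
  have := hmul _ _ hh hh (by rwa [add_halves]) (A * Y) B
  rw [add_halves] at this
  simp [this, hvanish A hh]

theorem isUnit_map_one (hmul : IsMultiplicativeOn φ (ball 0 ε \ {0}))
    (hinj : ∀ u ∈ ball (0 : ℂ) ε \ {0}, Function.Injective (φ u)) {u : ℂ}
    (hu : u ∈ ball (0 : ℂ) ε \ {0}) : IsUnit (φ u 1) := by
  have hh := half_mem_ball_diff_zero hu
  obtain ⟨X, hX⟩ := LinearMap.injective_iff_surjective.mp (hinj _ hh) 1
  have := hmul _ _ hu (neg_mem_ball_diff_zero hh) (by rwa [show u + -(u / 2) = u / 2 by ring]) 1 X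
  rw [one_mul, show u + -(u / 2) = u / 2 by ring, hX] at this
  exact (Matrix.isUnit_iff_isUnit_det _).mpr (Matrix.isUnit_det_of_right_inverse this.symm)

theorem exists_algEquiv_map_eq_map_one_mul [Nonempty n]
    (hhol : ∀ X, DifferentiableOn ℂ (fun u => φ u X) (ball 0 ε \ {0}))
    (hmul : IsMultiplicativeOn φ (ball 0 ε \ {0}))
    (hunit : ∀ u ∈ ball (0 : ℂ) ε \ {0}, IsUnit (φ u 1)) {u₀ : ℂ}
    (hu₀ : u₀ ∈ ball (0 : ℂ) ε \ {0}) :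
    ∃ α : Matrix n n ℂ ≃ₐ[ℂ] Matrix n n ℂ, ∀ u ∈ ball (0 : ℂ) ε \ {0}, ∀ X,
      φ u X = φ u 1 * α X ∧ Commute (φ u 1) (α X) := by
  have hB : IsUnit (φ u₀ 1).det := (Matrix.isUnit_iff_isUnit_det _).mp (hunit u₀ hu₀)
  let a := LinearMap.mulLeft ℂ (φ u₀ 1)⁻¹ ∘ₗ φ u₀
  have ha : ∀ X, a X = (φ u₀ 1)⁻¹ * φ u₀ X := fun _ => rfl
  have hrep : ∀ u ∈ ball (0 : ℂ) ε \ {0}, ∀ X, φ u X = φ u 1 * a X ∧ Commute (φ u 1) (a X) := by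
    intro u hu X
    have hright : a X * φ u 1 = φ u X := by
      apply (hunit u₀ hu₀).mul_left_cancel
      rw [← mul_assoc, ha, Matrix.mul_nonsing_inv_cancel_left (h := hB),
        map_mul_map_one_comm hhol hmul hu₀ hu]
    have hcomm : Commute (φ u 1) (a X) := by
      apply (hunit u hu).mul_right_cancel
      rw [mul_assoc, hright, map_mul_map_one_comm hhol hmul hu hu]
    exact ⟨hright.symm.trans hcomm.eq.symm, hcomm⟩
  have hmul_a : ∀ X Y, a (X * Y) = a X * a Y := by
    intro X Y
    have hh := half_mem_ball_diff_zero hu₀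
    have hhh : u₀ / 2 + u₀ / 2 ∈ ball (0 : ℂ) ε \ {0} := by rwa [add_halves]
    have hsq : φ u₀ 1 = φ (u₀ / 2) 1 * φ (u₀ / 2) 1 := by
      rw [← hmul _ _ hh hh hhh, add_halves, mul_one]
    apply (hunit u₀ hu₀).mul_left_cancel
    rw [← (hrep u₀ hu₀ _).1, ← add_halves u₀, hmul _ _ hh hh hhh, add_halves, hsq,
      (hrep _ hh X).1, (hrep _ hh Y).1, mul_assoc, ← mul_assoc (a X), ← (hrep _ hh X).2.eq]
    simp only [mul_assoc]
  let α := AlgHom.ofLinearMap a (Matrix.nonsing_inv_mul _ hB) hmul_a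
  have hα : Function.Bijective α := ⟨α.toRingHom.injective,
    (LinearMap.injective_iff_surjective (f := α.toLinearMap)).mp α.toRingHom.injective⟩
  exact ⟨AlgEquiv.ofBijective α hα, hrep⟩

theorem exists_map_one_eq_exp_smul_one
    (hhol : ∀ i j, DifferentiableOn ℂ (fun u => φ u 1 i j) (ball 0 ε \ {0}))
    (hmul : IsMultiplicativeOn φ (ball 0 ε \ {0}))
    (hunit : ∀ u ∈ ball (0 : ℂ) ε \ {0}, IsUnit (φ u 1)) {i : n}
    (hscalar : ∀ u ∈ ball (0 : ℂ) ε \ {0}, φ u 1 = φ u 1 i i • 1) :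
    ∃ lam, ∀ u ∈ ball (0 : ℂ) ε \ {0}, φ u 1 = Complex.exp (lam * u) • 1 := by
  have : Nonempty n := ⟨i⟩
  have hne : ∀ u ∈ ball (0 : ℂ) ε \ {0}, φ u 1 i i ≠ 0 := fun u hu h0 => by
    have := hunit u hu
    rw [hscalar u hu, h0, zero_smul] at this
    exact not_isUnit_zero this
  obtain ⟨lam, hlam⟩ := exists_eq_exp_of_map_add (hhol i i) hne fun u v hu hv huv => by
    rw [← mul_one (1 : Matrix n n ℂ), hmul u v hu hv huv, hscalar u hu, hscalar v hv]
    simp [mul_comm]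
  exact ⟨lam, fun u hu => by rw [hscalar u hu, hlam u hu]⟩

end MultiplicativeFamily

theorem stmt19_general (N : ℕ) (ε : ℝ)
    (φ : ℂ → Mat N →ₗ[ℂ] Mat N)
    (hhol : ∀ (X : Mat N) (i j : Fin N),
      DifferentiableOn ℂ (fun u => ((φ u) X) i j) (Metric.ball (0 : ℂ) ε \ {0}))
    (hne : ∃ u ∈ Metric.ball (0 : ℂ) ε \ {0}, φ u ≠ 0)
    (hmul : ∀ u1 u2 : ℂ, u1 ∈ Metric.ball (0 : ℂ) ε \ {0} →
      u2 ∈ Metric.ball (0 : ℂ) ε \ {0} → u1 + u2 ∈ Metric.ball (0 : ℂ) ε \ {0} →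
      ∀ X Y : Mat N, (φ (u1 + u2)) (X * Y) = (φ u1) X * (φ u2) Y) :
    (∃ (lam : ℂ) (T : Mat N), IsUnit T ∧
      ∀ u ∈ Metric.ball (0 : ℂ) ε \ {0}, ∀ X : Mat N,
        (φ u) X = Complex.exp (lam * u) • (T * X * T⁻¹))
    ∧ (∀ u ∈ Metric.ball (0 : ℂ) ε \ {0}, Function.Bijective (φ u))
    ∧ (∃ ψ : ℂ → Mat N →ₗ[ℂ] Mat N,
        (∀ u ∈ Metric.ball (0 : ℂ) ε \ {0}, ψ u = φ u) ∧
        ∀ (X : Mat N) (i j : Fin N),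
          DifferentiableOn ℂ (fun u => ((ψ u) X) i j) (Metric.ball (0 : ℂ) ε)) := by
  obtain ⟨u₀, hu₀, hφu₀⟩ := hne
  have : Nonempty (Fin N) := by
    by_contra! hN
    exact hφu₀ (Subsingleton.elim _ _)
  let i₀ : Fin N := Classical.arbitrary _
  have hhol' X := Matrix.differentiableOn_of_forall_apply (hhol X)
  have hinj u hu := injective_of_exists_ne_zero hhol' hmul ⟨u₀, hu₀, hφu₀⟩ (u := u) hu
  have hunit u hu := isUnit_map_one hmul hinj (u := u) hu
  obtain ⟨α, hα⟩ := exists_algEquiv_map_eq_map_one_mul hhol' hmul hunit hu₀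
  obtain ⟨T, hT, hαT⟩ := Matrix.exists_isUnit_conj_of_algEquiv α
  have hscalar u hu : φ u 1 = φ u 1 i₀ i₀ • 1 :=
    Matrix.eq_smul_one_of_forall_commute (fun X => α.apply_symm_apply X ▸ (hα u hu _).2) i₀
  obtain ⟨lam, hlam⟩ := exists_map_one_eq_exp_smul_one (hhol 1) hmul hunit hscalar
  have hφ u (hu : u ∈ ball (0 : ℂ) ε \ {0}) X : φ u X = Complex.exp (lam * u) • (T * X * T⁻¹) := by
    rw [(hα u hu X).1, hlam u hu, hαT, smul_mul_assoc, one_mul]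
  refine ⟨⟨lam, T, hT, hφ⟩, fun u hu => ⟨hinj u hu, LinearMap.injective_iff_surjective.mp
    (hinj u hu)⟩, fun u => Complex.exp (lam * u) •
      (LinearMap.mulRight ℂ T⁻¹ ∘ₗ LinearMap.mulLeft ℂ T), fun u hu => ?_, fun X i j => ?_⟩
  · exact LinearMap.ext fun X => (hφ u hu X).symm
  · simp only [LinearMap.smul_apply, LinearMap.comp_apply, LinearMap.mulLeft_apply,
      LinearMap.mulRight_apply, Matrix.smul_apply, smul_eq_mul]
    fun_prop

/-- from the proof of Lemma `pole-aut-lem`: a holomorphic, not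
identically zero, multiplicative family `φ(u)` of endomorphisms of `Mat(N, ℂ)` on a
punctured disk is of the form `φ(u)(X) = exp(λu)·T X T⁻¹`; in particular each `φ(u)` is
invertible and `φ` extends holomorphically to the whole disk. -/
theorem stmt19 (N : ℕ) (ε : ℝ) (hε : 0 < ε)
    (φ : ℂ → Mat N →ₗ[ℂ] Mat N)
    (hhol : ∀ (X : Mat N) (i j : Fin N),
      DifferentiableOn ℂ (fun u => ((φ u) X) i j) (Metric.ball (0 : ℂ) ε \ {0}))
    (hne : ∃ u ∈ Metric.ball (0 : ℂ) ε \ {0}, φ u ≠ 0)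
    (hmul : ∀ u1 u2 : ℂ, u1 ∈ Metric.ball (0 : ℂ) ε \ {0} →
      u2 ∈ Metric.ball (0 : ℂ) ε \ {0} → u1 + u2 ∈ Metric.ball (0 : ℂ) ε \ {0} →
      ∀ X Y : Mat N, (φ (u1 + u2)) (X * Y) = (φ u1) X * (φ u2) Y) :
    (∃ (lam : ℂ) (T : Mat N), IsUnit T ∧
      ∀ u ∈ Metric.ball (0 : ℂ) ε \ {0}, ∀ X : Mat N,
        (φ u) X = Complex.exp (lam * u) • (T * X * T⁻¹))
    ∧ (∀ u ∈ Metric.ball (0 : ℂ) ε \ {0}, Function.Bijective (φ u))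
    ∧ (∃ ψ : ℂ → Mat N →ₗ[ℂ] Mat N,
        (∀ u ∈ Metric.ball (0 : ℂ) ε \ {0}, ψ u = φ u) ∧
        ∀ (X : Mat N) (i j : Fin N),
          DifferentiableOn ℂ (fun u => ((ψ u) X) i j) (Metric.ball (0 : ℂ) ε)) :=
  stmt19_general N ε φ hhol hne hmul
end
end
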